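/- Let R be an associative ring with identity that is finitely generated as a ring (i.e., finitely generated as a ℤ-algebra), let n ≥ 2 and k ≥ n be integers, and let K be an algebraically closed field. Call a group homomorphism ρ : E_{k+1}(R) → GL_n(K) irreducible if the only K-linear subspaces of K^n invariant under ρ(γ) for all γ ∈ E_{k+1}(R) are 0 and K^n, and call two homomorphisms ρ₁, ρ₂ conjugate if there exists g ∈ GL_n(K) with ρ₂(γ) = g·ρ₁(γ)·g^{−1} for all γ. Then there are only finitely many conjugacy classes of irreducible homomorphisms E_{k+1}(R) → GL_n(K). -/

import Mathlib

/-!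
Every homomorphism `E_N(R) → GL_n(K)` with `n < N` is trivial, so for `n ≥ 2` there are no
irreducible ones at all. Only the Steinberg relations between the elementary matrices are used,
and the argument is an induction on `N`.

For `N = 3` and `n ≤ 2`: a non-scalar `x_ij(r)` commutes with `x_ik(r)` and `x_kj(1)`; in
dimension two the centraliser of a non-scalar endomorphism is commutative, so these two commute
and their commutator `x_ij(r)` is trivial after all. Hence all roots are scalar, so they commute,
so they are trivial.

For `N ≥ 4`, the roots `x_ao(r)` of a column `o` commute and have a common eigenvector. If its
character is nontrivial at `a₀`, applying `x_{a₀b}(1)` for the `b` in a subset of the other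
`N - 2` indices yields `2^(N-2) ≥ N > n` common eigenvectors with distinct characters, which is
absurd. Otherwise the common fixed space `W` of the column is nonzero and stable under the roots
avoiding `o`; by induction these act trivially on `W` and on `V ⧸ W`, hence commute, hence are
trivial, and then so is every root.
-/

open Matrix

namespace Paper

/-! ### Generalities -/

lemma one_add_mul_aux {M : Type*} [Ring M] {x y : M} (h1 : x + y = 0) (h2 : x * y = 0) :
    (1 + x) * (1 + y) = 1 := by
  have h : (1 + x) * (1 + y) = 1 + (x + y) + x * y := by noncomm_ring
  rw [h, h1, h2, add_zero, add_zero]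

/-- The group of self-homeomorphisms of a topological space, under composition. -/
instance homeomorphGroup (X : Type*) [TopologicalSpace X] : Group (X ≃ₜ X) where
  mul a b := b.trans a
  one := Homeomorph.refl X
  inv := Homeomorph.symm
  mul_assoc a b c := rfl
  one_mul a := Homeomorph.ext fun x => rfl
  mul_one a := Homeomorph.ext fun x => rfl
  inv_mul_cancel a := Homeomorph.ext fun x => a.symm_apply_apply x

section Elementary

variable (R : Type*) [Ring R]

lemma stdBasis_cancel (n : ℕ) (i j : Fin n) (a : R) :
    Matrix.single i j a + Matrix.single i j (-a) = 0 := by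
  rw [← Matrix.single_add, add_neg_cancel, Matrix.single_zero]

/-- The elementary matrix `e_{ij}(r) = 1 + r·E_{ij}` as an invertible matrix,
i.e. an element of `GL_n(R)`. -/
def elemGL (n : ℕ) (i j : Fin n) (hij : i ≠ j) (r : R) : (Matrix (Fin n) (Fin n) R)ˣ where
  val := 1 + Matrix.single i j r
  inv := 1 + Matrix.single i j (-r)
  val_inv := one_add_mul_aux (stdBasis_cancel R n i j r)
    (Matrix.single_mul_single_of_ne (c := r) i j i (Ne.symm hij) (-r))
  inv_val := one_add_mul_aux
    (by have := stdBasis_cancel R n i j (-r); rwa [neg_neg] at this)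
    (Matrix.single_mul_single_of_ne (c := -r) i j i (Ne.symm hij) r)

/-- The elementary group `E_n(R)`: the subgroup of `GL_n(R)` generated by all
elementary matrices. -/
def ElementaryGroup (n : ℕ) : Subgroup (Matrix (Fin n) (Fin n) R)ˣ :=
  Subgroup.closure { A | ∃ (i j : Fin n) (hij : i ≠ j) (r : R), A = elemGL R n i j hij r }

lemma elemGL_mem (n : ℕ) (i j : Fin n) (hij : i ≠ j) (r : R) :
    elemGL R n i j hij r ∈ ElementaryGroup R n :=
  Subgroup.subset_closure ⟨i, j, hij, r, rfl⟩

/-- The diagonal matrix with `-1` at places `i`, `j` and `1` elsewhere. -/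
def negPairDiag (n : ℕ) (i j : Fin n) : Matrix (Fin n) (Fin n) R :=
  Matrix.diagonal fun k => if k = i ∨ k = j then -1 else 1

lemma negPairDiag_mul_self (n : ℕ) (i j : Fin n) :
    negPairDiag R n i j * negPairDiag R n i j = 1 := by
  rw [negPairDiag, Matrix.diagonal_mul_diagonal]
  have h : (fun k => (if k = i ∨ k = j then (-1 : R) else 1) *
      (if k = i ∨ k = j then (-1 : R) else 1)) = fun _ => (1 : R) := by
    funext k
    by_cases h : k = i ∨ k = j <;> simp [h]
  rw [h, Matrix.diagonal_one]

/-- The matrix `negPairDiag` as an invertible matrix. -/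
def negPairGL (n : ℕ) (i j : Fin n) : (Matrix (Fin n) (Fin n) R)ˣ :=
  ⟨negPairDiag R n i j, negPairDiag R n i j,
    negPairDiag_mul_self R n i j, negPairDiag_mul_self R n i j⟩

/-- The matrix `A_{i,i+1}` (0-indexed: diagonal entries `i` and `i+1` equal `-1`). -/
def APair (n : ℕ) (i : Fin (n - 1)) : (Matrix (Fin n) (Fin n) R)ˣ :=
  negPairGL R n ⟨(i : ℕ), by have := i.isLt; omega⟩ ⟨(i : ℕ) + 1, by have := i.isLt; omega⟩

/-- `E_n(R, 2R)`: the smallest normal subgroup of `E_n(R)` containing all elementary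
matrices `e_{ij}(s)` with `s ∈ 2R`. -/
def RelElementaryGroup (n : ℕ) : Subgroup ↥(ElementaryGroup R n) :=
  Subgroup.normalClosure
    { x : ↥(ElementaryGroup R n) | ∃ (i j : Fin n) (hij : i ≠ j) (r : R),
        x.val = elemGL R n i j hij (2 * r) }

end Elementary

section Symplectic

variable (S : Type*) [CommRing S]

/-- The index involution `σ` on `{0, …, 2n-1}`: `σk = k + n` if `k < n`, else `σk = k - n`. -/
def sigIdx (n : ℕ) (k : Fin (2 * n)) : Fin (2 * n) :=
  if h : (k : ℕ) < n then ⟨(k : ℕ) + n, by omega⟩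
  else ⟨(k : ℕ) - n, by have := k.isLt; omega⟩

lemma sigIdx_ne (n : ℕ) (k : Fin (2 * n)) : sigIdx n k ≠ k := by
  have hk := k.isLt
  unfold sigIdx
  split_ifs with h <;>
    · intro hEq
      have h2 := congrArg Fin.val hEq
      simp only [Fin.val_mk] at h2 -- may need adjusting
      omega

lemma sigIdx_inj (n : ℕ) {k l : Fin (2 * n)} (h : k ≠ l) : sigIdx n k ≠ sigIdx n l := by
  have hk := k.isLt
  have hl := l.isLt
  have hkl : (k : ℕ) ≠ (l : ℕ) := fun hc => h (Fin.ext hc)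
  unfold sigIdx
  split_ifs with h1 h2 h2 <;>
    · intro hEq
      have h3 := congrArg Fin.val hEq
      simp only [Fin.val_mk] at h3
      omega

/-- The symplectic elementary matrix `ρ_{ij}(a)`, as a matrix.  When `j = σi` it is
`1 + a E_{i,σi}`; otherwise it is `1 + a E_{ij} - δ a E_{σj,σi}` where `δ = 1` if `i, j`
are on the same side of `n` and `δ = -1` otherwise. -/
def symElemMat (n : ℕ) (i j : Fin (2 * n)) (a : S) : Matrix (Fin (2 * n)) (Fin (2 * n)) S :=
  if j = sigIdx n i then 1 + Matrix.single i j a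
  else 1 + Matrix.single i j a -
    Matrix.single (sigIdx n j) (sigIdx n i)
      ((if ((i : ℕ) < n ↔ (j : ℕ) < n) then 1 else -1) * a)

lemma symElemMat_mul_neg (n : ℕ) (i j : Fin (2 * n)) (hij : i ≠ j) (a : S) :
    symElemMat S n i j a * symElemMat S n i j (-a) = 1 := by
  unfold symElemMat
  set d : S := if ((i : ℕ) < n ↔ (j : ℕ) < n) then 1 else -1 with hd
  split_ifs with h
  · exact one_add_mul_aux (stdBasis_cancel S _ i j a)
      (Matrix.single_mul_single_of_ne (c := a) i j i (Ne.symm hij) (-a))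
  · rw [add_sub_assoc, add_sub_assoc]
    apply one_add_mul_aux
    · have c1 := stdBasis_cancel S _ i j a
      have c2 := stdBasis_cancel S _ (sigIdx n j) (sigIdx n i) (d * a)
      rw [mul_neg]
      calc Matrix.single i j a - Matrix.single (sigIdx n j) (sigIdx n i) (d * a) +
            (Matrix.single i j (-a) - Matrix.single (sigIdx n j) (sigIdx n i) (-(d * a)))
          = (Matrix.single i j a + Matrix.single i j (-a)) -
            (Matrix.single (sigIdx n j) (sigIdx n i) (d * a) +
              Matrix.single (sigIdx n j) (sigIdx n i) (-(d * a))) := by abel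
        _ = 0 := by rw [c1, c2, sub_zero]
    · simp only [sub_mul, mul_sub]
      rw [Matrix.single_mul_single_of_ne (c := a) i j i (Ne.symm hij) (-a),
        Matrix.single_mul_single_of_ne (c := a) i j (sigIdx n j) (Ne.symm (sigIdx_ne n j)) (d * -a),
        Matrix.single_mul_single_of_ne (c := d * a) (sigIdx n j) (sigIdx n i) i (sigIdx_ne n i) (-a),
        Matrix.single_mul_single_of_ne (c := d * a) (sigIdx n j) (sigIdx n i) (sigIdx n j)
          (sigIdx_inj n hij) (d * -a)]
      simp

/-- The symplectic elementary matrix `ρ_{ij}(a)` as an invertible matrix. -/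
def symElemGL (n : ℕ) (i j : Fin (2 * n)) (hij : i ≠ j) (a : S) :
    (Matrix (Fin (2 * n)) (Fin (2 * n)) S)ˣ where
  val := symElemMat S n i j a
  inv := symElemMat S n i j (-a)
  val_inv := symElemMat_mul_neg S n i j hij a
  inv_val := by have := symElemMat_mul_neg S n i j hij (-a); rwa [neg_neg] at this

/-- The elementary symplectic group `Ep_{2n}(S)`, generated by all symplectic
elementary matrices. -/
def EpGroup (n : ℕ) : Subgroup (Matrix (Fin (2 * n)) (Fin (2 * n)) S)ˣ :=
  Subgroup.closure
    { A | ∃ (i j : Fin (2 * n)) (hij : i ≠ j) (a : S), A = symElemGL S n i j hij a }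

/-- The matrix `J = [[0, I_n], [-I_n, 0]]` of the standard symplectic form. -/
def Jmat (n : ℕ) : Matrix (Fin (2 * n)) (Fin (2 * n)) S :=
  Matrix.of fun i j =>
    if (i : ℕ) + n = (j : ℕ) then 1 else if (j : ℕ) + n = (i : ℕ) then -1 else 0

/-- The symplectic group `Sp_{2n}(S)`: invertible `2n × 2n` matrices `M` with
`Mᵀ * J * M = J`. -/
def SpGroup (n : ℕ) : Subgroup (Matrix (Fin (2 * n)) (Fin (2 * n)) S)ˣ where
  carrier := { M | (↑M : Matrix (Fin (2 * n)) (Fin (2 * n)) S)ᵀ * Jmat S n * ↑M = Jmat S n }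
  one_mem' := by simp
  mul_mem' := by
    intro a b ha hb
    show (↑(a * b) : Matrix (Fin (2 * n)) (Fin (2 * n)) S)ᵀ * Jmat S n *
        (↑(a * b) : Matrix (Fin (2 * n)) (Fin (2 * n)) S) = Jmat S n
    rw [Units.val_mul, Matrix.transpose_mul]
    calc (↑b : Matrix (Fin (2*n)) (Fin (2*n)) S)ᵀ * (↑a : Matrix (Fin (2*n)) (Fin (2*n)) S)ᵀ *
          Jmat S n * (↑a * ↑b)
        = (↑b : Matrix (Fin (2*n)) (Fin (2*n)) S)ᵀ *
            ((↑a : Matrix (Fin (2*n)) (Fin (2*n)) S)ᵀ * Jmat S n * ↑a) * ↑b := by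
          noncomm_ring
      _ = (↑b : Matrix (Fin (2*n)) (Fin (2*n)) S)ᵀ * Jmat S n * ↑b := by rw [ha]
      _ = Jmat S n := hb
  inv_mem' := by
    intro a ha
    have ha' : (↑a : Matrix (Fin (2 * n)) (Fin (2 * n)) S)ᵀ * Jmat S n *
        (↑a : Matrix (Fin (2 * n)) (Fin (2 * n)) S) = Jmat S n := ha
    show ((a⁻¹ : (Matrix (Fin (2 * n)) (Fin (2 * n)) S)ˣ) :
        Matrix (Fin (2 * n)) (Fin (2 * n)) S)ᵀ * Jmat S n *
        ((a⁻¹ : (Matrix (Fin (2 * n)) (Fin (2 * n)) S)ˣ) :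
        Matrix (Fin (2 * n)) (Fin (2 * n)) S) = Jmat S n
    set A : Matrix (Fin (2 * n)) (Fin (2 * n)) S := ↑a with hA
    set B : Matrix (Fin (2 * n)) (Fin (2 * n)) S := ((a⁻¹ :
        (Matrix (Fin (2 * n)) (Fin (2 * n)) S)ˣ) : Matrix (Fin (2 * n)) (Fin (2 * n)) S) with hB
    have h1 : A * B = 1 := a.mul_inv
    calc Bᵀ * Jmat S n * B
        = Bᵀ * (Aᵀ * Jmat S n * A) * B := by rw [ha']
      _ = (A * B)ᵀ * Jmat S n * (A * B) := by rw [Matrix.transpose_mul]; noncomm_ring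
      _ = Jmat S n := by rw [h1]; simp

end Symplectic

section Extra

variable (R : Type*) [Ring R]

/-- Index of the `(2i-1)`-th row (1-indexed), i.e. `2i` 0-indexed. -/
def bIdx0 (k : ℕ) (i : Fin k) : Fin (2 * k) := ⟨2 * (i : ℕ), by have := i.isLt; omega⟩

def bIdx1 (k : ℕ) (i : Fin k) : Fin (2 * k) := ⟨2 * (i : ℕ) + 1, by have := i.isLt; omega⟩

lemma bIdx_ne (k : ℕ) (i : Fin k) : bIdx0 k i ≠ bIdx1 k i := by
  simp only [bIdx0, bIdx1, ne_eq, Fin.mk.injEq]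
  omega

/-- The matrix `B_i = e_{2i-1,2i}(1) e_{2i,2i-1}(-1) e_{2i-1,2i}(1) e_{2i,2i-1}(-1)`
(1-indexed) in `E_{2k}(R)`. -/
def Bmat (k : ℕ) (i : Fin k) : (Matrix (Fin (2 * k)) (Fin (2 * k)) R)ˣ :=
  elemGL R (2 * k) (bIdx0 k i) (bIdx1 k i) (bIdx_ne k i) 1 *
  elemGL R (2 * k) (bIdx1 k i) (bIdx0 k i) (bIdx_ne k i).symm (-1) *
  elemGL R (2 * k) (bIdx0 k i) (bIdx1 k i) (bIdx_ne k i) 1 *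
  elemGL R (2 * k) (bIdx1 k i) (bIdx0 k i) (bIdx_ne k i).symm (-1)

end Extra

section SymplecticExtra

variable (S : Type*) [CommRing S]

def cIdx0 (n : ℕ) (i : Fin n) : Fin (2 * n) := ⟨(i : ℕ), by have := i.isLt; omega⟩

def cIdx1 (n : ℕ) (i : Fin n) : Fin (2 * n) := ⟨n + (i : ℕ), by have := i.isLt; omega⟩

lemma cIdx_ne (n : ℕ) (i : Fin n) : cIdx0 n i ≠ cIdx1 n i := by
  have := i.pos
  simp only [cIdx0, cIdx1, ne_eq, Fin.mk.injEq]
  omega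

/-- The matrix `C_i = ρ_{i,n+i}(1) ρ_{n+i,i}(-1) ρ_{i,n+i}(1) ρ_{n+i,i}(-1)` in
`Sp_{2n}(S)`. -/
def Cmat (n : ℕ) (i : Fin n) : (Matrix (Fin (2 * n)) (Fin (2 * n)) S)ˣ :=
  symElemGL S n (cIdx0 n i) (cIdx1 n i) (cIdx_ne n i) 1 *
  symElemGL S n (cIdx1 n i) (cIdx0 n i) (cIdx_ne n i).symm (-1) *
  symElemGL S n (cIdx0 n i) (cIdx1 n i) (cIdx_ne n i) 1 *
  symElemGL S n (cIdx1 n i) (cIdx0 n i) (cIdx_ne n i).symm (-1)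

/-- The equivalence `Fin n ⊕ Fin n ≃ Fin (2 * n)`. -/
def finDouble (n : ℕ) : Fin n ⊕ Fin n ≃ Fin (2 * n) :=
  finSumFinEquiv.trans (finCongr (two_mul n).symm)

/-- The block-diagonal matrix `diag(A, B)` as a `2n × 2n` matrix. -/
def blockDiag2 (n : ℕ) (A B : Matrix (Fin n) (Fin n) S) :
    Matrix (Fin (2 * n)) (Fin (2 * n)) S :=
  Matrix.reindex (finDouble n) (finDouble n) (Matrix.fromBlocks A 0 0 B)

lemma blockDiag2_mul (n : ℕ) (A B A' B' : Matrix (Fin n) (Fin n) S) :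
    blockDiag2 S n A B * blockDiag2 S n A' B' = blockDiag2 S n (A * A') (B * B') := by
  unfold blockDiag2
  rw [Matrix.reindex_apply, Matrix.reindex_apply, Matrix.reindex_apply,
    Matrix.submatrix_mul_equiv, Matrix.fromBlocks_multiply]
  simp

lemma blockDiag2_one (n : ℕ) : blockDiag2 S n 1 1 = 1 := by
  unfold blockDiag2
  rw [Matrix.reindex_apply, Matrix.fromBlocks_one, Matrix.submatrix_one_equiv]

/-- The hyperbolic embedding `A ↦ diag(A, (Aᵀ)⁻¹) = diag(A, (A⁻¹)ᵀ)` from `GL_n(S)`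
to `GL_{2n}(S)`. -/
def hypGL (n : ℕ) (A : (Matrix (Fin n) (Fin n) S)ˣ) :
    (Matrix (Fin (2 * n)) (Fin (2 * n)) S)ˣ where
  val := blockDiag2 S n ↑A ((↑(A⁻¹) : Matrix (Fin n) (Fin n) S)ᵀ)
  inv := blockDiag2 S n ↑(A⁻¹) ((↑A : Matrix (Fin n) (Fin n) S)ᵀ)
  val_inv := by
    rw [blockDiag2_mul, ← Matrix.transpose_mul, A.mul_inv, Matrix.transpose_one,
      blockDiag2_one]
  inv_val := by
    rw [blockDiag2_mul, ← Matrix.transpose_mul, A.inv_mul, Matrix.transpose_one,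
      blockDiag2_one]

end SymplecticExtra


section Steinberg

variable {ι κ R M N : Type*} [Ring R] [Monoid M] [Monoid N]

/-- The Steinberg relations, written without inverses so that they make sense in a monoid; the
last one is the commutator relation `[x_ik(p), x_kj(q)] = x_ij(pq)`. -/
structure IsSteinberg (x : (i j : ι) → i ≠ j → R → M) : Prop where
  mul_neg : ∀ i j (hij : i ≠ j) r, x i j hij r * x i j hij (-r) = 1
  commute : ∀ i j k l (hij : i ≠ j) (hkl : k ≠ l), j ≠ k → i ≠ l → ∀ p q,
    Commute (x i j hij p) (x k l hkl q)
  comm : ∀ i j k (hik : i ≠ k) (hkj : k ≠ j) (hij : i ≠ j) p q,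
    x i k hik p * x k j hkj q = x i j hij (p * q) * x k j hkj q * x i k hik p

def column (x : (i j : ι) → i ≠ j → R → M) (o : ι) (p : {a // a ≠ o} × R) : M :=
  x p.1 o p.1.2 p.2

lemma exists_ne_ne_of_three_le_card [Fintype ι] (h : 3 ≤ Fintype.card ι) (i j : ι) :
    ∃ k, k ≠ i ∧ k ≠ j :=
  ENat.exists_ne_ne_of_three_le (by simpa [ENat.card_eq_coe_fintype_card] using h) i j

namespace IsSteinberg

variable {x : (i j : ι) → i ≠ j → R → M}

lemma map (hx : IsSteinberg x) (φ : M →* N) : IsSteinberg fun i j h r => φ (x i j h r) where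
  mul_neg i j h r := by rw [← map_mul, hx.mul_neg, map_one]
  commute i j k l hij hkl h₁ h₂ p q := (hx.commute i j k l hij hkl h₁ h₂ p q).map φ
  comm i j k hik hkj hij p q := by simp only [← map_mul, hx.comm i j k hik hkj hij p q]

lemma of_injective (φ : M →* N) (hφ : Function.Injective φ)
    (h : IsSteinberg fun i j hij r => φ (x i j hij r)) : IsSteinberg x where
  mul_neg i j hij r := hφ (by rw [map_mul, map_one, h.mul_neg])
  commute i j k l hij hkl h₁ h₂ p q := hφ (by
    simpa only [map_mul] using (h.commute i j k l hij hkl h₁ h₂ p q).eq)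
  comm i j k hik hkj hij p q := hφ (by simpa only [map_mul] using h.comm i j k hik hkj hij p q)

lemma codRestrict (hx : IsSteinberg x) (S : Submonoid M) (hS : ∀ i j h r, x i j h r ∈ S) :
    IsSteinberg fun i j h r => (⟨x i j h r, hS i j h r⟩ : S) :=
  of_injective S.subtype Subtype.val_injective hx

lemma comp_injective (hx : IsSteinberg x) (f : κ → ι) (hf : Function.Injective f) :
    IsSteinberg fun (i j : κ) (h : i ≠ j) r => x (f i) (f j) (hf.ne h) r where
  mul_neg _ _ _ r := hx.mul_neg _ _ _ r
  commute _ _ _ _ _ _ h₁ h₂ p q := hx.commute _ _ _ _ _ _ (hf.ne h₁) (hf.ne h₂) p q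
  comm _ _ _ _ _ _ p q := hx.comm _ _ _ _ _ _ p q

lemma isUnit (hx : IsSteinberg x) {i j : ι} (hij : i ≠ j) (r : R) : IsUnit (x i j hij r) :=
  ⟨⟨_, _, hx.mul_neg i j hij r, by simpa using hx.mul_neg i j hij (-r)⟩, rfl⟩

lemma conj (hx : IsSteinberg x) {i j k : ι} (hij : i ≠ j) (hki : k ≠ i) (hkj : k ≠ j)
    (p q : R) : x i j hij p * x k i hki q * x k j hkj (q * p) = x k i hki q * x i j hij p := by
  rw [hx.comm k j i hki hij hkj q p, mul_assoc,
    ← (hx.commute k j k i hkj hki hkj.symm hki (q * p) q).eq, ← mul_assoc,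
    (hx.commute k j i j hkj hij hij.symm hkj (q * p) p).eq]

lemma commute_column (hx : IsSteinberg x) (o : ι) (p q : {a // a ≠ o} × R) :
    Commute (column x o p) (column x o q) :=
  hx.commute _ o _ o _ _ (Ne.symm q.1.2) p.1.2 _ _

lemma eq_one_of_commute (hx : IsSteinberg x) {i j k : ι} (hik : i ≠ k) (hkj : k ≠ j)
    (hij : i ≠ j) (p : R) (h : Commute (x i k hik p) (x k j hkj 1)) : x i j hij p = 1 := by
  have := hx.comm i j k hik hkj hij p 1
  rw [mul_one, mul_assoc, ← h.eq] at this
  exact ((hx.isUnit hik p).mul (hx.isUnit hkj 1)).mul_eq_right.mp this.symm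

variable [Fintype ι]

lemma eq_one_of_pairwise_commute (hx : IsSteinberg x) (hι : 3 ≤ Fintype.card ι)
    (h : ∀ i j hij p k l hkl q, Commute (x i j hij p) (x k l hkl q))
    {i j : ι} (hij : i ≠ j) (r : R) : x i j hij r = 1 := by
  obtain ⟨k, hki, hkj⟩ := exists_ne_ne_of_three_le_card hι i j
  exact hx.eq_one_of_commute hki.symm hkj hij r (h ..)

lemma eq_one_of_forall_ne_eq_one (hx : IsSteinberg x) (hι : 3 ≤ Fintype.card ι) (o : ι)
    (h : ∀ i j hij r, i ≠ o → j ≠ o → x i j hij r = 1) {i j : ι} (hij : i ≠ j) (r : R) :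
    x i j hij r = 1 := by
  obtain ⟨k, hki, hkj⟩ := exists_ne_ne_of_three_le_card hι i j
  by_cases hi : i = o
  · subst hi
    refine hx.eq_one_of_commute hki.symm hkj hij r ?_
    rw [h k j hkj 1 hki (Ne.symm hij)]
    exact Commute.one_right _
  by_cases hj : j = o
  · subst hj
    refine hx.eq_one_of_commute hki.symm hkj hij r ?_
    rw [h i k hki.symm r hi hkj]
    exact Commute.one_left _
  exact h i j hij r hi hj

lemma eq_one_of_column_eq_one (hx : IsSteinberg x) (hι : 3 ≤ Fintype.card ι) (o : ι)
    (h : ∀ p, column x o p = 1) {i j : ι} (hij : i ≠ j) (r : R) : x i j hij r = 1 :=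
  hx.eq_one_of_forall_ne_eq_one hι o (fun i j hij r hi hj => hx.eq_one_of_commute hi
    (Ne.symm hj) hij r (by rw [show x i o hi r = 1 from h (⟨i, hi⟩, r)]; exact .one_left _))
    hij r

end IsSteinberg

end Steinberg

section LinearAlgebra

open Module

variable {K V : Type*} [Field K] [AddCommGroup V] [Module K V]

lemma exists_common_eigenvector [IsAlgClosed K] [FiniteDimensional K V]
    [Nontrivial V] {A : Type*} (f : A → Module.End K V) (hf : ∀ a b, Commute (f a) (f b)) :
    ∃ v : V, v ≠ 0 ∧ ∃ χ : A → K, ∀ a, f a v = χ a • v := by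
  induction hd : finrank K V using Nat.strong_induction_on generalizing V with
  | _ d ih =>
  by_cases H : ∃ a μ, (f a).eigenspace μ ≠ ⊥ ∧ (f a).eigenspace μ ≠ ⊤
  · obtain ⟨a, μ, hbot, htop⟩ := H
    have hE : ∀ b, ∀ w ∈ (f a).eigenspace μ, f b w ∈ (f a).eigenspace μ := fun b w hw => by
      rw [Module.End.mem_eigenspace_iff] at hw ⊢
      rw [← Module.End.mul_apply, (hf a b).eq, Module.End.mul_apply, hw, map_smul]
    have : Nontrivial ((f a).eigenspace μ) := Submodule.nontrivial_iff_ne_bot.mpr hbot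
    obtain ⟨w, hw, χ, hχ⟩ := ih _ (hd ▸ Submodule.finrank_lt htop)
      (fun b => (f b).restrict (hE b)) (fun b c => LinearMap.restrict_commute (hf b c) _ _) rfl
    exact ⟨w, by simpa using hw, χ, fun b => congrArg Subtype.val (hχ b)⟩
  · push Not at H
    obtain ⟨v, hv⟩ := exists_ne (0 : V)
    refine ⟨v, hv, fun a => (f a).exists_eigenvalue.choose, fun a => ?_⟩
    have hμ := (f a).exists_eigenvalue.choose_spec
    rw [← Module.End.mem_eigenspace_iff, H a _ (Module.End.hasEigenvalue_iff.mp hμ)]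
    exact Submodule.mem_top

lemma card_le_finrank_of_common_eigenvectors [FiniteDimensional K V] {A J : Type*}
    [Fintype J] (f : A → Module.End K V) (hf : ∀ a b, Commute (f a) (f b)) {w : J → V}
    (hw : ∀ j, w j ≠ 0) {χ : J → A → K} (hχ : Function.Injective χ)
    (h : ∀ j a, f a (w j) = χ j a • w j) : Fintype.card J ≤ finrank K V := by
  have hind := (Module.End.independent_iInf_maxGenEigenspace_of_forall_mapsTo f
    fun a b μ => Module.End.mapsTo_maxGenEigenspace_of_comm (hf b a) μ).comp hχ
  refine (hind.linearIndependent _ (fun j => ?_) hw).fintype_card_le_finrank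
  exact Submodule.mem_iInf _ |>.mpr fun a =>
    Module.End.eigenspace_le_maxGenEigenspace (Module.End.mem_eigenspace_iff.mpr (h j a))

lemma commute_of_commute_of_forall_ne_smul_one [FiniteDimensional K V]
    (hV : finrank K V ≤ 2) {z A B : Module.End K V} (hz : ∀ c : K, z ≠ c • 1)
    (hA : Commute z A) (hB : Commute z B) : Commute A B := by
  obtain ⟨v, hv⟩ : ∃ v, LinearIndependent K ![v, z v] := by
    by_contra! h
    obtain ⟨c, hc⟩ := LinearMap.exists_eq_smul_id_of_forall_notLinearIndependent h
    exact hz c hc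
  have hspan : Submodule.span K (Set.range ![v, z v]) = ⊤ :=
    hv.span_eq_top_of_card_eq_finrank' (by have := hv.fintype_card_le_finrank; simp at *; omega)
  have mem_span_one_z : ∀ C, Commute z C → ∃ a b : K, C = a • 1 + b • z := by
    intro C hC
    have hCv : C v ∈ Submodule.span K {v, z v} := by
      rw [← Matrix.range_cons_cons_empty]
      exact hspan ▸ Submodule.mem_top
    obtain ⟨a, b, hab⟩ := Submodule.mem_span_pair.mp hCv
    refine ⟨a, b, LinearMap.ext_on_range hspan (Fin.forall_fin_two.mpr ⟨?_, ?_⟩)⟩ <;>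
      simp only [Matrix.cons_val_zero, Matrix.cons_val_one, LinearMap.add_apply,
        LinearMap.smul_apply, Module.End.one_apply]
    · exact hab.symm
    · rw [← Module.End.mul_apply, ← hC.eq, Module.End.mul_apply, ← hab, map_add, map_smul,
        map_smul]
  obtain ⟨a, b, rfl⟩ := mem_span_one_z A hA
  obtain ⟨a', b', rfl⟩ := mem_span_one_z B hB
  refine .add_left (.add_right ?_ ?_) (.add_right ?_ ?_) <;>
    exact .smul_left (.smul_right (by first | exact .one_left _ | exact .one_right _ | rfl) _) _

lemma commute_of_sub_one_mul_sub_one {A : Type*} [Ring A] {a b : A}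
    (h₁ : (a - 1) * (b - 1) = 0) (h₂ : (b - 1) * (a - 1) = 0) : Commute a b := by
  have : a * b - b * a = (a - 1) * (b - 1) - (b - 1) * (a - 1) := by noncomm_ring
  rwa [h₁, h₂, sub_zero, sub_eq_zero] at this

lemma apply_ne_zero_of_isUnit {f : Module.End K V} (hf : IsUnit f) {v : V}
    (hv : v ≠ 0) : f v ≠ 0 := fun h =>
  hv ((Module.End.isUnit_iff f).mp hf |>.injective (h.trans (map_zero f).symm))

lemma ne_zero_of_apply_eq_smul {f : Module.End K V} (hf : IsUnit f) {v : V}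
    (hv : v ≠ 0) {c : K} (h : f v = c • v) : c ≠ 0 := by
  rintro rfl
  exact apply_ne_zero_of_isUnit hf hv (by rw [h, zero_smul])

def Submodule.endStabilizer (W : Submodule K V) : Submonoid (Module.End K V) where
  carrier := {f | W ≤ W.comap f}
  mul_mem' hf hg _ hw := hf (hg hw)
  one_mem' _ hw := hw

lemma exists_ne_bot_ne_top_of_two_le_finrank [FiniteDimensional K V] (hV : 2 ≤ finrank K V) :
    ∃ W : Submodule K V, W ≠ ⊥ ∧ W ≠ ⊤ := by
  have : Nontrivial V := Module.nontrivial_of_finrank_pos (R := K) (by omega)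
  obtain ⟨v, hv⟩ := exists_ne (0 : V)
  refine ⟨K ∙ v, by simpa using hv, fun h => ?_⟩
  have := finrank_span_singleton (K := K) hv
  rw [h, finrank_top] at this
  omega

end LinearAlgebra

lemma le_two_pow_sub_two {n : ℕ} (hn : 4 ≤ n) : n ≤ 2 ^ (n - 2) := by
  induction n, hn using Nat.le_induction with
  | base => norm_num
  | succ n hn ih =>
    rw [show n + 1 - 2 = n - 2 + 1 by omega, pow_succ]
    omega

section Eigenvectors

open Module

variable {ι R K V : Type*} [Ring R] [Field K] [AddCommGroup V] [Module K V]
  {x : (i j : ι) → i ≠ j → R → Module.End K V}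

lemma IsSteinberg.column_apply_of_forall_eq_smul [DecidableEq ι] (hx : IsSteinberg x)
    {o a b : ι} (hab : a ≠ b) (ha : a ≠ o) (q : R) {w : V} {χ : {a // a ≠ o} × R → K}
    (hw : ∀ p, column x o p w = χ p • w) (hχ : ∀ p, χ p ≠ 0) (p : {a // a ≠ o} × R) :
    column x o p (x a b hab q w) =
      (if (p.1 : ι) = b then χ p * (χ (⟨a, ha⟩, q * p.2))⁻¹ else χ p) • x a b hab q w := by
  obtain ⟨⟨l, hl⟩, t⟩ := p
  have hw' : ∀ l (hl : l ≠ o) t, x l o hl t w = χ (⟨l, hl⟩, t) • w :=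
    fun l hl t => hw (⟨l, hl⟩, t)
  simp only [column]
  split_ifs with hlb
  · subst hlb
    have h := congr($(hx.conj hl hab ha t q) w)
    simp only [Module.End.mul_apply, hw', map_smul] at h
    rw [mul_comm, mul_smul, ← h, smul_smul, inv_mul_cancel₀ (hχ _), one_smul]
  · rw [← Module.End.mul_apply, (hx.commute l o a b hl hab (Ne.symm ha) hlb t q).eq,
      Module.End.mul_apply, hw', map_smul]

lemma IsSteinberg.two_pow_le_finrank [Fintype ι] [DecidableEq ι] [FiniteDimensional K V]
    (hx : IsSteinberg x) {o : ι} {v : V} (hv : v ≠ 0) {χ : {a // a ≠ o} × R → K}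
    (hχ : ∀ p, column x o p v = χ p • v) {a₀ : {a // a ≠ o}} {r₀ : R} (h : χ (a₀, r₀) ≠ 1) :
    2 ^ (Fintype.card ι - 2) ≤ finrank K V := by
  have hχ0 p : χ p ≠ 0 := ne_zero_of_apply_eq_smul (hx.isUnit _ _) hv (hχ p)
  let σ : Finset ι := {o, (a₀ : ι)}ᶜ
  let χS (S : Finset ι) (p : {a // a ≠ o} × R) : K :=
    if (p.1 : ι) ∈ S then χ p * (χ (a₀, p.2))⁻¹ else χ p
  have hχS S p : χS S p ≠ 0 := by unfold χS; split_ifs <;> simp [hχ0]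
  have hχS_inj : ∀ S ⊆ σ, ∀ S' ⊆ σ, χS S = χS S' → S ⊆ S' := by
    intro S hS S' hS' hSS' b hb
    by_contra hb'
    have hbo : b ≠ o := fun e => Finset.mem_compl.mp (hS hb) (by simp [e])
    have := congrFun hSS' (⟨b, hbo⟩, r₀)
    simp only [χS, if_pos hb, if_neg hb', mul_eq_left₀ (hχ0 _), inv_eq_one] at this
    exact h this
  have hvec : ∀ S ⊆ σ, ∃ w : V, w ≠ 0 ∧ ∀ p, column x o p w = χS S p • w := by
    intro S
    induction S using Finset.induction_on with
    | empty => exact fun _ => ⟨v, hv, by simpa [χS] using hχ⟩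
    | insert b S hbS ih =>
      intro hS
      obtain ⟨w, hw0, hw⟩ := ih ((Finset.subset_insert b S).trans hS)
      have hb : b ≠ o ∧ b ≠ a₀ := by simpa [σ, not_or] using hS (Finset.mem_insert_self b S)
      have hab : (a₀ : ι) ≠ b := Ne.symm hb.2
      refine ⟨x a₀ b hab 1 w, apply_ne_zero_of_isUnit (hx.isUnit hab 1) hw0,
        fun p => ?_⟩
      rw [hx.column_apply_of_forall_eq_smul hab a₀.2 1 hw (hχS S)]
      have ha₀ : (a₀ : ι) ∉ S := fun h =>
        Finset.mem_compl.mp (hS (Finset.mem_insert_of_mem h)) (by simp)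
      by_cases hpb : (p.1 : ι) = b
      · simp [χS, hpb, hbS, ha₀]
      · simp [χS, hpb]
  choose! w hw0 hw using hvec
  have hcard := card_le_finrank_of_common_eigenvectors (J := σ.powerset) (column x o)
    (hx.commute_column o) (w := fun S => w S) (fun S => hw0 S (Finset.mem_powerset.mp S.2))
    (χ := fun S => χS S) (fun S S' hSS' => Subtype.ext <| le_antisymm
      (hχS_inj S (Finset.mem_powerset.mp S.2) S' (Finset.mem_powerset.mp S'.2) hSS')
      (hχS_inj S' (Finset.mem_powerset.mp S'.2) S (Finset.mem_powerset.mp S.2) hSS'.symm))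
    (fun S => hw S (Finset.mem_powerset.mp S.2))
  rwa [Fintype.card_coe, Finset.card_powerset, Finset.card_compl,
    Finset.card_pair (Ne.symm a₀.2)] at hcard

lemma IsSteinberg.column_eigenvalue_eq_one [Fintype ι] [FiniteDimensional K V]
    (hx : IsSteinberg x) (h4 : 4 ≤ Fintype.card ι) (hV : finrank K V < Fintype.card ι) {o : ι}
    {v : V} (hv : v ≠ 0) {χ : {a // a ≠ o} × R → K} (hχ : ∀ p, column x o p v = χ p • v)
    (p : {a // a ≠ o} × R) : χ p = 1 := by
  classical
  by_contra h
  have := hx.two_pow_le_finrank hv hχ h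
  have := le_two_pow_sub_two h4
  omega

end Eigenvectors

universe u

section Rigidity

open Module

def SteinbergRigid (K : Type*) [Field K] (R : Type*) [Ring R] (ι : Type*) [Fintype ι] : Prop :=
  ∀ (V : Type u) [AddCommGroup V] [Module K V] [FiniteDimensional K V],
    finrank K V < Fintype.card ι → ∀ x : (i j : ι) → i ≠ j → R → Module.End K V,
    IsSteinberg x → ∀ i j (hij : i ≠ j) r, x i j hij r = 1

variable {ι R K : Type*} [Ring R] [Field K] [Fintype ι]

lemma SteinbergRigid.commute_of_mem_endStabilizer (hι : SteinbergRigid.{u} K R ι)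
    {V : Type u} [AddCommGroup V] [Module K V] [FiniteDimensional K V]
    {x : (i j : ι) → i ≠ j → R → Module.End K V} (hx : IsSteinberg x) {W : Submodule K V}
    (hW : ∀ i j hij r, x i j hij r ∈ Submodule.endStabilizer W)
    (hsub : finrank K W < Fintype.card ι) (hquot : finrank K (V ⧸ W) < Fintype.card ι)
    (i j : ι) (hij : i ≠ j) (p : R) (k l : ι) (hkl : k ≠ l) (q : R) :
    Commute (x i j hij p) (x k l hkl q) := by
  have hx' := hx.codRestrict _ hW
  have hfix i j hij r : ∀ w ∈ W, x i j hij r w = w := fun w hw => by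
    have := hι W hsub _ (hx'.map (Representation.subrepresentation
      (Submodule.endStabilizer W).subtype W fun g => g.2)) i j hij r
    exact congr(($this ⟨w, hw⟩ : V))
  have hmod i j hij r v : x i j hij r v - v ∈ W := by
    have := hι (V ⧸ W) hquot _ (hx'.map (Representation.quotient
      (Submodule.endStabilizer W).subtype W fun g => g.2)) i j hij r
    exact (Submodule.Quotient.eq W).mp congr($this (W.mkQ v))
  apply commute_of_sub_one_mul_sub_one <;> ext v <;>
    simp [hfix _ _ _ _ _ (hmod _ _ _ _ v)]

lemma steinbergRigid_of_card_eq_three (h3 : Fintype.card ι = 3) : SteinbergRigid.{u} K R ι := by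
  intro V _ _ _ hV x hx
  have hscalar i j (hij : i ≠ j) r : ∃ c : K, x i j hij r = c • 1 := by
    by_contra! hz
    obtain ⟨k, hki, hkj⟩ := exists_ne_ne_of_three_le_card h3.ge i j
    refine hz 1 ?_
    rw [one_smul]
    refine hx.eq_one_of_commute hki.symm hkj hij r ?_
    exact commute_of_commute_of_forall_ne_smul_one (by omega) hz
      (hx.commute i j i k hij hki.symm hij.symm hki.symm r r)
      (hx.commute i j k j hij hkj (Ne.symm hkj) hij r 1)
  refine fun i j hij r =>
    hx.eq_one_of_pairwise_commute h3.ge (fun i j hij p k l hkl q => ?_) hij r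
  obtain ⟨c, hc⟩ := hscalar i j hij p
  rw [hc]
  exact (Commute.one_left _).smul_left c

variable [IsAlgClosed K]

lemma SteinbergRigid.of_subtype_ne [DecidableEq ι] (h4 : 4 ≤ Fintype.card ι) (o : ι)
    (ho : SteinbergRigid.{u} K R {i // i ≠ o}) : SteinbergRigid.{u} K R ι := by
  intro V _ _ _ hV x hx
  have hι : 3 ≤ Fintype.card ι := by omega
  have hcard : Fintype.card {i // i ≠ o} = Fintype.card ι - 1 := by
    simp [Fintype.card_subtype_compl]
  rcases subsingleton_or_nontrivial V with _ | _
  · exact fun _ _ _ _ => Subsingleton.elim _ _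
  obtain ⟨v, hv, χ, hχ⟩ := exists_common_eigenvector _ (hx.commute_column o)
  have hχ1 := hx.column_eigenvalue_eq_one h4 hV hv hχ
  let W : Submodule K V := ⨅ p, (column x o p).eigenspace 1
  have hmem w : w ∈ W ↔ ∀ p, column x o p w = w := by simp [W, Submodule.mem_iInf]
  have hWbot : W ≠ ⊥ := fun h => hv <| (Submodule.mem_bot K).mp <|
    h ▸ (hmem v).mpr fun p => by rw [hχ, hχ1, one_smul]
  by_cases hWtop : W = ⊤
  · exact fun i j hij r => hx.eq_one_of_column_eq_one hι o (fun p => LinearMap.ext fun w =>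
      (hmem w).mp (hWtop ▸ Submodule.mem_top) p) hij r
  have hL := hx.comp_injective Subtype.val (Subtype.val_injective (p := (· ≠ o)))
  have hWinv (a b : {i // i ≠ o}) hab q :
      x a b (Subtype.val_injective.ne hab) q ∈ Submodule.endStabilizer W :=
    fun w hw => (hmem _).mpr fun p => by
      rw [hx.column_apply_of_forall_eq_smul _ a.2 q (fun p => by rw [(hmem w).mp hw p, one_smul])
        (fun _ => one_ne_zero)]
      simp
  have hsub : finrank K W < Fintype.card {i // i ≠ o} := by
    have := Submodule.finrank_lt hWtop
    omega
  have hquot : finrank K (V ⧸ W) < Fintype.card {i // i ≠ o} := by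
    have := Submodule.finrank_quotient_add_finrank W
    have := Submodule.one_le_finrank_iff.mpr hWbot
    omega
  have hcomm := ho.commute_of_mem_endStabilizer hL hWinv hsub hquot
  exact fun i j hij r => hx.eq_one_of_forall_ne_eq_one hι o (fun a b hab t ha hb =>
    hL.eq_one_of_pairwise_commute (by omega) hcomm (i := ⟨a, ha⟩) (j := ⟨b, hb⟩)
      (fun h => hab (congrArg Subtype.val h)) t) hij r

theorem steinbergRigid (h : 3 ≤ Fintype.card ι) : SteinbergRigid.{u} K R ι := by
  classical
  obtain ⟨m, hm⟩ : ∃ m, Fintype.card ι = m + 3 := ⟨_, (Nat.sub_add_cancel h).symm⟩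
  induction m generalizing ι with
  | zero => exact steinbergRigid_of_card_eq_three hm
  | succ m ih =>
    obtain ⟨o⟩ : Nonempty ι := Fintype.card_pos_iff.mp (by omega)
    exact .of_subtype_ne (by omega) o (ih (by simp [Fintype.card_subtype_compl]; omega)
      (by simp [Fintype.card_subtype_compl]; omega))

end Rigidity

section Elementary

variable {R : Type*} [Ring R]

lemma isSteinberg_one_add_single {n : Type*} [Fintype n] [DecidableEq n] :
    IsSteinberg fun (i j : n) (_ : i ≠ j) (r : R) => (1 + Matrix.single i j r : Matrix n n R) where
  mul_neg i j hij r := one_add_mul_aux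
    (by rw [← Matrix.single_add, add_neg_cancel, Matrix.single_zero])
    (Matrix.single_mul_single_of_ne _ _ _ _ hij.symm _)
  commute i j k l _ _ hjk hil p q := by
    simp only [Commute, SemiconjBy, mul_add, add_mul, mul_one, one_mul,
      Matrix.single_mul_single_of_ne _ _ _ _ hjk, Matrix.single_mul_single_of_ne _ _ _ _ hil.symm]
    abel
  comm i j k hik hkj hij p q := by
    simp only [mul_add, add_mul, mul_one, one_mul, add_zero, Matrix.single_mul_single_same,
      Matrix.single_mul_single_of_ne _ _ _ _ hkj.symm,
      Matrix.single_mul_single_of_ne _ _ _ _ hij.symm]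
    abel

def ElementaryGroup.elem (N : ℕ) (i j : Fin N) (hij : i ≠ j) (r : R) : ElementaryGroup R N :=
  ⟨elemGL R N i j hij r, elemGL_mem R N i j hij r⟩

lemma ElementaryGroup.isSteinberg_elem (N : ℕ) : IsSteinberg (ElementaryGroup.elem (R := R) N) :=
  .of_injective ((Units.coeHom _).comp (ElementaryGroup R N).subtype)
    (Units.val_injective.comp Subtype.val_injective) isSteinberg_one_add_single

lemma ElementaryGroup.hom_ext {G : Type*} [Monoid G] {N : ℕ} {f g : ElementaryGroup R N →* G}
    (h : ∀ i j hij r, f (elem N i j hij r) = g (elem N i j hij r)) : f = g := by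
  refine MonoidHom.eq_of_eqOn_dense Subgroup.closure_closure_coe_preimage ?_
  rintro γ ⟨i, j, hij, r, hγ⟩
  obtain rfl : γ = elem N i j hij r := Subtype.ext hγ
  exact h i j hij r

theorem ElementaryGroup.monoidHom_eq_one {N n : ℕ} (hN : 3 ≤ N) (hn : n < N) {K : Type*}
    [Field K] [IsAlgClosed K] (ρ : ElementaryGroup R N →* (Matrix (Fin n) (Fin n) K)ˣ) :
    ρ = 1 := by
  let φ : (Matrix (Fin n) (Fin n) K)ˣ →* Module.End K (Fin n → K) :=
    (Matrix.toLinAlgEquiv' : Matrix (Fin n) (Fin n) K ≃ₐ[K] _).toMonoidHom.comp (Units.coeHom _)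
  have hφ : Function.Injective φ := Matrix.toLinAlgEquiv'.injective.comp Units.val_injective
  refine ElementaryGroup.hom_ext fun i j hij r => hφ ?_
  rw [MonoidHom.one_apply, map_one]
  exact steinbergRigid (by simpa using hN) (Fin n → K) (by simpa using hn) _
    ((isSteinberg_elem N).map (φ.comp ρ)) i j hij r

end Elementary

theorem statement14_general (R : Type*) [Ring R]
    (n k : ℕ) (hn : 2 ≤ n) (hk : n ≤ k)
    (K : Type*) [Field K] [IsAlgClosed K] :
    ∃ T : Set (↥(ElementaryGroup R (k + 1)) →* (Matrix (Fin n) (Fin n) K)ˣ), T.Finite ∧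
      ∀ ρ : ↥(ElementaryGroup R (k + 1)) →* (Matrix (Fin n) (Fin n) K)ˣ,
        (∀ W : Submodule K (Fin n → K),
          (∀ γ : ↥(ElementaryGroup R (k + 1)), ∀ w ∈ W,
            Matrix.mulVec ((ρ γ).val) w ∈ W) → W = ⊥ ∨ W = ⊤) →
        ∃ ρ' ∈ T, ∃ g : (Matrix (Fin n) (Fin n) K)ˣ, ∀ γ, ρ' γ = g * ρ γ * g⁻¹ := by
  refine ⟨∅, Set.finite_empty, fun ρ hirr => absurd hirr ?_⟩
  have hρ : ρ = 1 := ElementaryGroup.monoidHom_eq_one (by omega) (by omega) ρ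
  obtain ⟨W, hbot, htop⟩ := exists_ne_bot_ne_top_of_two_le_finrank (K := K) (V := Fin n → K)
    (by simpa using hn)
  push Not
  exact ⟨W, fun γ w hw => by simpa [hρ] using hw, hbot, htop⟩

/-- For a finitely generated ring `R`, `2 ≤ n ≤ k`, and an
algebraically closed field `K`, there are only finitely many conjugacy classes of
irreducible representations `E_{k+1}(R) → GL_n(K)`. -/
theorem statement14 (R : Type*) [Ring R]
    (hR : ∃ s : Finset R, Subring.closure (s : Set R) = ⊤)
    (n k : ℕ) (hn : 2 ≤ n) (hk : n ≤ k)
    (K : Type*) [Field K] [IsAlgClosed K] :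
    ∃ T : Set (↥(ElementaryGroup R (k + 1)) →* (Matrix (Fin n) (Fin n) K)ˣ), T.Finite ∧
      ∀ ρ : ↥(ElementaryGroup R (k + 1)) →* (Matrix (Fin n) (Fin n) K)ˣ,
        (∀ W : Submodule K (Fin n → K),
          (∀ γ : ↥(ElementaryGroup R (k + 1)), ∀ w ∈ W,
            Matrix.mulVec ((ρ γ).val) w ∈ W) → W = ⊥ ∨ W = ⊤) →
        ∃ ρ' ∈ T, ∃ g : (Matrix (Fin n) (Fin n) K)ˣ, ∀ γ, ρ' γ = g * ρ γ * g⁻¹ :=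
  statement14_general R n k hn hk K

end Paper
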